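/- Let H be a real Hilbert space, C > 0, k ≥ 2 a real number, n ≥ 1, and z₁, …, z_n ∈ H. Let Π_C denote the projection onto the closed ball of radius C centered at the origin. Then ‖ (1/n)∑_{i=1}^{n} Π_C(z_i) − (1/n)∑_{i=1}^{n} z_i ‖ ≤ ( (1/n)∑_{i=1}^{n} ‖z_i‖^k ) / ( (k−1)·C^{k−1} ). That is, the bias of the clipped empirical mean is at most r̂^{(k)} / ((k−1)C^{k−1}), where r̂^{(k)} is the k-th empirical moment of the vectors. -/

import Mathlib

/-!
Clipping moves `z` by exactly `(‖z‖ - C)⁺`. By Bernoulli's inequality (the tangent line of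
`r ↦ r ^ k` at `r = C`), `(k - 1) C ^ (k - 1) (r - C) ≤ r ^ k` for all `r ≥ 0`.
Averaging this pointwise bound over the sample, via the triangle inequality, bounds the bias.
-/

/-- Projection onto the closed ball of radius `C` centered at the origin. -/
noncomputable def clip {H : Type*} [NormedAddCommGroup H] [NormedSpace ℝ H]
    (C : ℝ) (z : H) : H :=
  if ‖z‖ ≤ C then z else (C / ‖z‖) • z

open Finset

lemma sub_one_mul_sub_one_le_rpow {k t : ℝ} (hk : 1 ≤ k) (ht : 0 ≤ t) :
    (k - 1) * (t - 1) ≤ t ^ k := by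
  have bernoulli : 1 + k * (t - 1) ≤ t ^ k := by
    simpa using one_add_mul_self_le_rpow_one_add (s := t - 1) (by linarith) hk
  linarith

lemma sub_le_rpow_div {C k r : ℝ} (hC : 0 < C) (hk : 1 < k) (hr : 0 ≤ r) :
    r - C ≤ r ^ k / ((k - 1) * C ^ (k - 1)) := by
  have hCk : C ^ k = C ^ (k - 1) * C := by
    rw [← Real.rpow_add_one hC.ne', sub_add_cancel]
  have key := mul_le_mul_of_nonneg_right
    (sub_one_mul_sub_one_le_rpow hk.le (div_nonneg hr hC.le)) (Real.rpow_nonneg hC.le k)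
  rw [Real.div_rpow hr hC.le, div_mul_cancel₀ _ (Real.rpow_pos_of_pos hC k).ne', hCk] at key
  rw [le_div_iff₀ (mul_pos (by linarith) (Real.rpow_pos_of_pos hC _))]
  calc (r - C) * ((k - 1) * C ^ (k - 1))
      = (k - 1) * (r / C - 1) * (C ^ (k - 1) * C) := by field_simp
    _ ≤ r ^ k := key

lemma norm_clip_sub_self {H : Type*} [NormedAddCommGroup H] [NormedSpace ℝ H]
    {C : ℝ} (hC : 0 ≤ C) (z : H) : ‖clip C z - z‖ = max (‖z‖ - C) 0 := by
  rw [clip]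
  split_ifs with h
  · rw [sub_self, norm_zero, max_eq_right (by linarith)]
  · have hz : 0 < ‖z‖ := by linarith
    rw [show (C / ‖z‖) • z - z = (C / ‖z‖ - 1) • z by rw [sub_smul, one_smul], norm_smul,
      Real.norm_of_nonpos, max_eq_left (by linarith)]
    · field_simp
      ring
    · rw [div_sub_one hz.ne']
      exact div_nonpos_of_nonpos_of_nonneg (by linarith) hz.le

lemma norm_clip_sub_self_le {H : Type*} [NormedAddCommGroup H] [NormedSpace ℝ H]
    {C k : ℝ} (hC : 0 < C) (hk : 1 < k) (z : H) :
    ‖clip C z - z‖ ≤ ‖z‖ ^ k / ((k - 1) * C ^ (k - 1)) := by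
  rw [norm_clip_sub_self hC.le]
  have hk1 : 0 < k - 1 := by linarith
  exact max_le (sub_le_rpow_div hC hk (norm_nonneg z)) (by positivity)

theorem clipped_mean_bias_general {H : Type*} [NormedAddCommGroup H]
    [InnerProductSpace ℝ H]
    (C : ℝ) (hC : 0 < C) (k : ℝ) (hk : 2 ≤ k) (n : ℕ)
    (z : Fin n → H) :
    ‖(1 / (n : ℝ)) • ∑ i, clip C (z i) - (1 / (n : ℝ)) • ∑ i, z i‖
      ≤ ((1 / (n : ℝ)) * ∑ i, ‖z i‖ ^ k) / ((k - 1) * C ^ (k - 1)) := by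
  rw [← smul_sub, ← sum_sub_distrib, norm_smul, Real.norm_of_nonneg (by positivity),
    mul_div_assoc, sum_div]
  refine mul_le_mul_of_nonneg_left ((norm_sum_le _ _).trans (sum_le_sum fun i _ => ?_))
    (by positivity)
  exact norm_clip_sub_self_le hC (by linarith) (z i)

/-- The bias of the clipped empirical mean is at most
r̂^{(k)} / ((k−1)C^{k−1}), where r̂^{(k)} = (1/n)∑‖z_i‖^k is the k-th empirical moment. -/
theorem clipped_mean_bias {H : Type*} [NormedAddCommGroup H]
    [InnerProductSpace ℝ H] [CompleteSpace H]
    (C : ℝ) (hC : 0 < C) (k : ℝ) (hk : 2 ≤ k) (n : ℕ) (hn : 1 ≤ n)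
    (z : Fin n → H) :
    ‖(1 / (n : ℝ)) • ∑ i, clip C (z i) - (1 / (n : ℝ)) • ∑ i, z i‖
      ≤ ((1 / (n : ℝ)) * ∑ i, ‖z i‖ ^ k) / ((k - 1) * C ^ (k - 1)) :=
  clipped_mean_bias_general C hC k hk n z
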